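/- Let W = F_{n₁} ⊗ ⋯ ⊗ F_{n_k} with N = n₁⋯n_k, and write any diagonal unitary E ∈ Δ_N as E = Σ_{r ∈ G} c_r D_r where G = ℤ_{n₁} × ⋯ × ℤ_{n_k}, D_r = ⊗_i diag(1, ω_i, …, ω_i^{n_i−1})^{r_i}, and c_r = (1/N)·tr(E D_r*). Then W* E W = Σ_{r ∈ G} c_r σ_{n−r}, a linear combination of permutation matrices; in particular, each coefficient c_r appears as an entry of W*EW exactly N times. -/

import Mathlib

open Matrix Complex

/-- ω = e^{-2πi/n} -/
noncomputable def fourierOmega (n : ℕ) : ℂ :=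
  Complex.exp (-2 * Real.pi * Complex.I / n)

/-- The n×n discrete Fourier matrix with entries ω^{jk}/√n. -/
noncomputable def fourierMatrix (n : ℕ) : Matrix (Fin n) (Fin n) ℂ :=
  Matrix.of fun j k => fourierOmega n ^ ((j : ℕ) * (k : ℕ)) / (Real.sqrt n : ℂ)

/-- D = diag(1, ω, ω², …, ω^{n-1}). -/
noncomputable def fourierDiag (n : ℕ) : Matrix (Fin n) (Fin n) ℂ :=
  Matrix.diagonal fun i => fourierOmega n ^ (i : ℕ)

/-- σ = E₁₂ + E₂₃ + ⋯ + E_{n1}, the cyclic shift sending e_i to e_{i-1 mod n}. -/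
noncomputable def cyclicShift (n : ℕ) : Matrix (Fin n) (Fin n) ℂ :=
  Matrix.of fun i j => if (j : ℕ) = ((i : ℕ) + 1) % n then 1 else 0

/-- W = F_{n₁} ⊗ ⋯ ⊗ F_{n_k}, realized on the index set Π i, Fin (n i). -/
noncomputable def tensorFourier {k : ℕ} (n : Fin k → ℕ) :
    Matrix (∀ i, Fin (n i)) (∀ i, Fin (n i)) ℂ :=
  Matrix.of fun x y => ∏ i, fourierMatrix (n i) (x i) (y i)

/-- D_r = D_{n₁}^{r₁} ⊗ ⋯ ⊗ D_{n_k}^{r_k}. -/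
noncomputable def tensorDiag {k : ℕ} (n : Fin k → ℕ) (r : ∀ i, Fin (n i)) :
    Matrix (∀ i, Fin (n i)) (∀ i, Fin (n i)) ℂ :=
  Matrix.diagonal fun x => ∏ i, fourierOmega (n i) ^ ((x i : ℕ) * (r i : ℕ))

/-- σ_{m} = σ_{n₁}^{m₁} ⊗ ⋯ ⊗ σ_{n_k}^{m_k}. -/
noncomputable def tensorShift {k : ℕ} (n : Fin k → ℕ) (m : ∀ _ : Fin k, ℕ) :
    Matrix (∀ i, Fin (n i)) (∀ i, Fin (n i)) ℂ :=
  Matrix.of fun x y => ∏ i, ((cyclicShift (n i)) ^ (m i)) (x i) (y i)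

/-!
Since `ω` is a primitive `n`-th root of unity of modulus one, the `(x, y)` entry of `W* E W` is
`N⁻¹ ∑_z f z · conj (ω^{z·(x - y)})`, which depends on `x - y ∈ G` only and equals `c_{x - y}`.
On the other hand `σ_{n - r}` is the permutation matrix with ones exactly where `x - y = r`.
-/

lemma isPrimitiveRoot_fourierOmega (n : ℕ) [NeZero n] : IsPrimitiveRoot (fourierOmega n) n := by
  have h := (Complex.isPrimitiveRoot_exp n (NeZero.ne n)).inv
  rwa [← Complex.exp_neg, ← neg_div, ← neg_mul, ← neg_mul] at h

lemma Fin.val_sub_add_val_modEq {n : ℕ} [NeZero n] (x y : Fin n) :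
    ((x - y : Fin n) : ℕ) + y ≡ x [MOD n] := by
  change _ % n = _ % n
  rw [← Fin.val_add, sub_add_cancel, Nat.mod_eq_of_lt x.isLt]

lemma star_fourierOmega_pow_mul_fourierOmega_pow (n : ℕ) [NeZero n] (z x y : Fin n) :
    star (fourierOmega n ^ ((z : ℕ) * x)) * fourierOmega n ^ ((z : ℕ) * y) =
      star (fourierOmega n ^ ((z : ℕ) * (x - y : Fin n))) := by
  have hω := isPrimitiveRoot_fourierOmega n
  have hnorm : ‖fourierOmega n ^ ((z : ℕ) * y)‖ = 1 := by
    rw [norm_pow, hω.norm'_eq_one (NeZero.ne n), one_pow]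
  have hsplit : fourierOmega n ^ ((z : ℕ) * x) =
      fourierOmega n ^ ((z : ℕ) * (x - y : Fin n)) * fourierOmega n ^ ((z : ℕ) * y) := by
    rw [← pow_add, ← mul_add]
    exact pow_eq_pow_of_modEq ((Fin.val_sub_add_val_modEq x y).symm.mul_left _) hω.pow_eq_one
  rw [hsplit, star_mul', mul_assoc, Complex.star_def, Complex.conj_mul', hnorm,
    ofReal_one, one_pow, mul_one]

lemma star_fourierMatrix_mul_fourierMatrix (n : ℕ) [NeZero n] (z x y : Fin n) :
    star (fourierMatrix n z x) * fourierMatrix n z y =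
      (n : ℂ)⁻¹ * star (fourierOmega n ^ ((z : ℕ) * (x - y : Fin n))) := by
  have hsqrt : ((Real.sqrt n : ℝ) : ℂ) * (Real.sqrt n : ℝ) = n := by
    rw [← Complex.ofReal_mul, Real.mul_self_sqrt (Nat.cast_nonneg n), Complex.ofReal_natCast]
  simp only [fourierMatrix, Matrix.of_apply]
  rw [star_div₀, Complex.star_def, Complex.conj_ofReal, div_mul_div_comm, hsqrt,
    ← Complex.star_def, star_fourierOmega_pow_mul_fourierOmega_pow, div_eq_inv_mul]

lemma conjTranspose_tensorFourier_mul_diagonal_mul_tensorFourier_apply {k : ℕ}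
    (n : Fin k → ℕ) [∀ i, NeZero (n i)] (f : (∀ i, Fin (n i)) → ℂ) (x y : ∀ i, Fin (n i)) :
    ((tensorFourier n)ᴴ * Matrix.diagonal f * tensorFourier n) x y =
      (Fintype.card (∀ i, Fin (n i)) : ℂ)⁻¹ *
        Matrix.trace (Matrix.diagonal f * (tensorDiag n (x - y))ᴴ) := by
  have hcard : (Fintype.card (∀ i, Fin (n i)) : ℂ) = ∏ i, (n i : ℂ) := by
    simp [Fintype.card_pi]
  rw [tensorDiag, Matrix.diagonal_conjTranspose, Matrix.diagonal_mul_diagonal,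
    Matrix.trace_diagonal, Matrix.mul_apply, Finset.mul_sum]
  refine Finset.sum_congr rfl fun z _ => ?_
  simp only [Matrix.mul_diagonal, Matrix.conjTranspose_apply, tensorFourier, Matrix.of_apply,
    Pi.star_apply, Pi.sub_apply]
  calc star (∏ i, fourierMatrix (n i) (z i) (x i)) * f z * ∏ i, fourierMatrix (n i) (z i) (y i)
      = f z * ∏ i, star (fourierMatrix (n i) (z i) (x i)) * fourierMatrix (n i) (z i) (y i) := by
        rw [star_prod, Finset.prod_mul_distrib]; ring
    _ = f z * ∏ i, (n i : ℂ)⁻¹ *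
          star (fourierOmega (n i) ^ ((z i : ℕ) * (x i - y i : Fin (n i)))) := by
        simp only [star_fourierMatrix_mul_fourierMatrix]
    _ = _ := by
        rw [Finset.prod_mul_distrib, Finset.prod_inv_distrib, ← hcard, star_prod]
        ring

lemma cyclicShift_pow_apply (n m : ℕ) (i j : Fin n) :
    (cyclicShift n ^ m) i j = if (j : ℕ) = (i + m) % n then 1 else 0 := by
  induction m generalizing j with
  | zero => simp [Matrix.one_apply, Nat.mod_eq_of_lt i.isLt, Fin.ext_iff, eq_comm]
  | succ m ih =>
    have hval : ((i : ℕ) + m) % n < n := Nat.mod_lt _ i.pos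
    rw [pow_succ, Matrix.mul_apply, Finset.sum_eq_single ⟨_, hval⟩]
    · rw [ih, if_pos rfl, one_mul]
      simp [cyclicShift, Nat.add_assoc]
    · intro l _ hl
      rw [ih, if_neg (fun h => hl (Fin.ext h)), zero_mul]
    · simp

lemma cyclicShift_pow_sub_apply (n : ℕ) [NeZero n] (r x y : Fin n) :
    (cyclicShift n ^ (n - (r : ℕ))) x y = if x - y = r then 1 else 0 := by
  rw [cyclicShift_pow_apply]
  refine if_congr ?_ rfl rfl
  rw [add_comm, ← Fin.val_sub, Fin.val_inj, eq_comm, sub_eq_iff_eq_add, sub_eq_iff_eq_add,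
    add_comm]

lemma tensorShift_sub_apply {k : ℕ} (n : Fin k → ℕ) [∀ i, NeZero (n i)]
    (r x y : ∀ i, Fin (n i)) :
    tensorShift n (fun i => n i - (r i : ℕ)) x y = if x - y = r then 1 else 0 := by
  simp only [tensorShift, Matrix.of_apply, cyclicShift_pow_sub_apply, Finset.prod_boole,
    Finset.mem_univ, forall_const, funext_iff, Pi.sub_apply]

theorem stmt_17_general {k : ℕ} (n : Fin k → ℕ) [∀ i, NeZero (n i)]
    (f : (∀ i, Fin (n i)) → ℂ) :
    ((tensorFourier n)ᴴ * Matrix.diagonal f * tensorFourier n =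
        ∑ r : ∀ i, Fin (n i),
          ((Fintype.card (∀ i, Fin (n i)) : ℂ)⁻¹ *
              Matrix.trace (Matrix.diagonal f * (tensorDiag n r)ᴴ)) •
            tensorShift n (fun i => n i - (r i : ℕ))) ∧
      ∀ x y : ∀ i, Fin (n i),
        ((tensorFourier n)ᴴ * Matrix.diagonal f * tensorFourier n) x y =
          (Fintype.card (∀ i, Fin (n i)) : ℂ)⁻¹ *
            Matrix.trace (Matrix.diagonal f * (tensorDiag n (x - y))ᴴ) := by
  refine ⟨?_, conjTranspose_tensorFourier_mul_diagonal_mul_tensorFourier_apply n f⟩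
  ext x y
  simp only [conjTranspose_tensorFourier_mul_diagonal_mul_tensorFourier_apply, Matrix.sum_apply,
    Matrix.smul_apply, tensorShift_sub_apply, smul_eq_mul, mul_ite, mul_one, mul_zero,
    Finset.sum_ite_eq, Finset.mem_univ, if_true]

theorem stmt_17 {k : ℕ} (n : Fin k → ℕ) [∀ i, NeZero (n i)]
    (f : (∀ i, Fin (n i)) → ℂ) (hf : ∀ x, ‖f x‖ = 1) :
    ((tensorFourier n)ᴴ * Matrix.diagonal f * tensorFourier n =
        ∑ r : ∀ i, Fin (n i),
          ((Fintype.card (∀ i, Fin (n i)) : ℂ)⁻¹ *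
              Matrix.trace (Matrix.diagonal f * (tensorDiag n r)ᴴ)) •
            tensorShift n (fun i => n i - (r i : ℕ))) ∧
      ∀ x y : ∀ i, Fin (n i),
        ((tensorFourier n)ᴴ * Matrix.diagonal f * tensorFourier n) x y =
          (Fintype.card (∀ i, Fin (n i)) : ℂ)⁻¹ *
            Matrix.trace (Matrix.diagonal f * (tensorDiag n (x - y))ᴴ) :=
  stmt_17_general n f
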